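/- arXiv:2206.07590 — 2 statements merged into one kernel-verified Lean document; each statement's English description precedes it below -/
import Mathlib

section
/- For every integer n ≥ 0 and every x, (2n+1) · P_{2n}(x) = Q_{2n+1}(x) + Σ_{i=0}^{n-1} C(2n+1, 2i+2) (-1)^{i+2} (4^{i+1} − 2) B_{2i+2} Q_{2n-2i-1}(x), where C(m,j) denotes the binomial coefficient and B_j denotes the j-th Bernoulli number. -/
open Polynomial Finset

/-- The derivative polynomials for tangent: `P 0 = X`,
`P (n+1) = (1 + X^2) * (P n)'`. -/
noncomputable def P : ℕ → Polynomial ℚ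
  | 0 => X
  | n + 1 => (1 + X ^ 2) * derivative (P n)

/-- The derivative polynomials for secant: `Q 0 = 1`,
`Q (n+1) = (1 + X^2) * (Q n)' + X * Q n`. -/
noncomputable def Q : ℕ → Polynomial ℚ
  | 0 => 1
  | n + 1 => (1 + X ^ 2) * derivative (Q n) + X * Q n

/-!
Writing `x = tan θ`, one has `P n (x) = tan⁽ⁿ⁾ θ` and `Q n (x) = sec⁽ⁿ⁾ θ / sec θ`, so the
exponential generating functions in `t` are `tan (θ + t)` and `1 / (cos t - x sin t)`. Hence
`Q(t) = cos t + sin t · P(t)`, whose odd part is `sin t` times the even part of `P(t)`.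
Multiplying by `t / sin t = ∑ (-1)^(m+1) (4^m - 2) B_{2m} t^{2m} / (2m)!` gives the theorem;
that `t / sin t` inverts `sin t / t` amounts to `∑ C(2k+1, 2m) (4^m - 2) B_{2m} = 0` for `k ≥ 1`,
which follows from `B_{2k+1}(1/2) = 0` and `∑ C(2k+1, j) B_j = B_{2k+1} = 0`.
All of this is carried out coefficientwise.
-/

lemma Finset.sum_range_two_mul {M : Type*} [AddCommMonoid M] (f : ℕ → M) (n : ℕ) :
    ∑ i ∈ range (2 * n), f i = ∑ j ∈ range n, (f (2 * j) + f (2 * j + 1)) := by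
  induction n with
  | zero => simp
  | succ n ih => rw [Nat.mul_succ, sum_range_succ, sum_range_succ, ih, sum_range_succ, add_assoc]

/-- `sinDeriv k` and `cosDeriv k` are the `k`-th derivatives of `sin` and `cos` at `0`. -/
def sinDeriv : ℕ → ℚ
  | 0 => 0
  | 1 => 1
  | k + 2 => -sinDeriv k

def cosDeriv (k : ℕ) : ℚ := sinDeriv (k + 1)

lemma sinDeriv_two_mul (j : ℕ) : sinDeriv (2 * j) = 0 := by
  induction j with
  | zero => rfl
  | succ j ih => rw [Nat.mul_succ, sinDeriv, ih, neg_zero]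

lemma sinDeriv_two_mul_add_one (j : ℕ) : sinDeriv (2 * j + 1) = (-1) ^ j := by
  induction j with
  | zero => rfl
  | succ j ih => rw [Nat.mul_succ, sinDeriv, ih, pow_succ, mul_neg_one]

lemma cosDeriv_two_mul_add_one (j : ℕ) : cosDeriv (2 * j + 1) = 0 := by
  rw [cosDeriv, sinDeriv, sinDeriv_two_mul, neg_zero]

/-- The `n`-th coefficient of `g(t) · ∑ P k t^k / k!`, in the normalisation `t^n / n!`. -/
noncomputable def binomConvP (g : ℕ → ℚ) (n : ℕ) : ℚ[X] :=
  ∑ k ∈ range (n + 1), n.choose k • g k • P (n - k)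

lemma binomConvP_succ (g : ℕ → ℚ) (n : ℕ) :
    binomConvP g (n + 1) =
      (1 + X ^ 2) * derivative (binomConvP g n) + binomConvP (fun k => g (k + 1)) n := by
  rw [binomConvP, binomConvP, sum_choose_succ_nsmul (fun i j => g i • P j), derivative_sum,
    mul_sum]
  congr 1
  refine sum_congr rfl fun k hk => ?_
  rw [Nat.sub_add_comm (Nat.lt_succ_iff.mp (mem_range.mp hk)), P, map_nsmul, map_smul,
    mul_smul_comm, mul_smul_comm]

lemma binomConvP_neg (g : ℕ → ℚ) (n : ℕ) : binomConvP (fun k => -g k) n = -binomConvP g n := by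
  simp only [binomConvP, neg_smul, smul_neg, sum_neg_distrib]

lemma Q_eq_and_X_mul_Q_eq_binomConvP (n : ℕ) :
    Q n = C (cosDeriv n) + binomConvP sinDeriv n ∧
      X * Q n = -C (sinDeriv n) + binomConvP cosDeriv n := by
  induction n with
  | zero => simp [binomConvP, Q, P, cosDeriv, sinDeriv]
  | succ n ih =>
    obtain ⟨hQ, hXQ⟩ := ih
    have hsin : binomConvP sinDeriv (n + 1) =
        (1 + X ^ 2) * derivative (binomConvP sinDeriv n) + binomConvP cosDeriv n :=
      binomConvP_succ _ _
    have hcos : binomConvP cosDeriv (n + 1) =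
        (1 + X ^ 2) * derivative (binomConvP cosDeriv n) - binomConvP sinDeriv n := by
      rw [sub_eq_add_neg, ← binomConvP_neg]
      exact binomConvP_succ _ _
    have hXQ_succ : X * Q (n + 1) = (1 + X ^ 2) * derivative (X * Q n) - Q n := by
      rw [Q, derivative_mul, derivative_X]
      ring
    constructor
    · rw [Q, hXQ, hQ, hsin, derivative_add, derivative_C, zero_add,
        show cosDeriv (n + 1) = -sinDeriv n from rfl, map_neg]
      ring
    · rw [hXQ_succ, hXQ, hQ, hcos, derivative_add, derivative_neg, derivative_C, neg_zero,
        zero_add, show sinDeriv (n + 1) = cosDeriv n from rfl]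
      ring

lemma Q_two_mul_add_one (k : ℕ) :
    Q (2 * k + 1) = ∑ j ∈ range (k + 1),
      (((2 * k + 1).choose (2 * j + 1) : ℚ) * (-1) ^ j) • P (2 * (k - j)) := by
  rw [(Q_eq_and_X_mul_Q_eq_binomConvP _).1, cosDeriv_two_mul_add_one, map_zero, zero_add,
    binomConvP, show 2 * k + 1 + 1 = 2 * (k + 1) by ring, sum_range_two_mul]
  refine sum_congr rfl fun j hj => ?_
  rw [sinDeriv_two_mul, sinDeriv_two_mul_add_one, zero_smul, smul_zero, zero_add,
    show 2 * k + 1 - (2 * j + 1) = 2 * (k - j) by omega, ← Nat.cast_smul_eq_nsmul ℚ, smul_smul]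

lemma bernoulli_eval_half_of_odd {N : ℕ} (hN : Odd N) : (Polynomial.bernoulli N).eval 2⁻¹ = 0 := by
  have h := Polynomial.bernoulli_eval_one_sub N 2⁻¹
  rw [hN.neg_one_pow, show (1 : ℚ) - 2⁻¹ = 2⁻¹ by norm_num] at h
  linarith

lemma sum_choose_mul_two_pow_mul_bernoulli (N : ℕ) :
    ∑ j ∈ range (N + 1), (N.choose j : ℚ) * 2 ^ j * _root_.bernoulli j =
      2 ^ N * (Polynomial.bernoulli N).eval 2⁻¹ := by
  rw [Polynomial.bernoulli, eval_finsetSum, mul_sum]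
  refine sum_congr rfl fun j hj => ?_
  rw [eval_monomial, ← Nat.add_sub_cancel' (Nat.lt_succ_iff.mp (mem_range.mp hj)), pow_add,
    Nat.add_sub_cancel_left, inv_pow]
  field_simp

lemma sum_choose_mul_four_pow_sub_two_mul_bernoulli {k : ℕ} (hk : k ≠ 0) :
    ∑ m ∈ range (k + 1), ((2 * k + 1).choose (2 * m) : ℚ) * (4 ^ m - 2) * _root_.bernoulli (2 * m) =
      0 := by
  set N := 2 * k + 1 with hN_def
  have hN : Odd N := odd_two_mul_add_one k
  have h_odd_terms (m : ℕ) : ((2 : ℚ) ^ (2 * m + 1) - 2) * _root_.bernoulli (2 * m + 1) = 0 := by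
    rcases m with _ | m
    · norm_num
    · rw [bernoulli_eq_zero_of_odd (odd_two_mul_add_one _) (by omega), mul_zero]
  have h_two_pow : ∑ j ∈ range (N + 1), (N.choose j : ℚ) * 2 ^ j * _root_.bernoulli j = 0 := by
    rw [sum_choose_mul_two_pow_mul_bernoulli, bernoulli_eval_half_of_odd hN, mul_zero]
  have h_one : ∑ j ∈ range (N + 1), (N.choose j : ℚ) * _root_.bernoulli j = 0 := by
    rw [sum_range_succ, _root_.sum_bernoulli, if_neg (by omega),
      bernoulli_eq_zero_of_odd hN (by omega), mul_zero, add_zero]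
  calc ∑ m ∈ range (k + 1), (N.choose (2 * m) : ℚ) * (4 ^ m - 2) * _root_.bernoulli (2 * m)
      = ∑ j ∈ range (N + 1), (N.choose j : ℚ) * (2 ^ j - 2) * _root_.bernoulli j := by
        rw [show N + 1 = 2 * (k + 1) by omega, sum_range_two_mul]
        refine sum_congr rfl fun m _ => ?_
        rw [mul_assoc _ (2 ^ (2 * m + 1) - 2), h_odd_terms, mul_zero, add_zero, pow_mul]
        norm_num
    _ = ∑ j ∈ range (N + 1), (N.choose j : ℚ) * 2 ^ j * _root_.bernoulli j -
          2 * ∑ j ∈ range (N + 1), (N.choose j : ℚ) * _root_.bernoulli j := by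
        rw [mul_sum, ← sum_sub_distrib]
        exact sum_congr rfl fun j _ => by ring
    _ = 0 := by rw [h_two_pow, h_one, mul_zero, sub_zero]

lemma choose_mul_choose_two_mul {n l m : ℕ} (hml : m ≤ l) (hln : l ≤ n) :
    (2 * n + 1).choose (2 * m) * (2 * (n - m) + 1).choose (2 * (l - m) + 1) =
      (2 * n + 1).choose (2 * l + 1) * (2 * l + 1).choose (2 * m) := by
  have h := Nat.choose_mul (n := 2 * n + 1) (k := 2 * l + 1) (s := 2 * m) (by omega)
  rwa [show 2 * n + 1 - 2 * m = 2 * (n - m) + 1 by omega,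
    show 2 * l + 1 - 2 * m = 2 * (l - m) + 1 by omega, eq_comm] at h

lemma sum_choose_bernoulli_mul_choose_odd_eq_zero {n l : ℕ} (hl0 : l ≠ 0) (hln : l ≤ n) :
    ∑ m ∈ range (l + 1), ((2 * n + 1).choose (2 * m) : ℚ) * (-1) ^ (m + 1) * (4 ^ m - 2) *
      _root_.bernoulli (2 * m) * ((2 * (n - m) + 1).choose (2 * (l - m) + 1) * (-1) ^ (l - m)) =
        0 := by
  have h_term (m : ℕ) (hm : m ∈ range (l + 1)) :
      ((2 * n + 1).choose (2 * m) : ℚ) * (-1) ^ (m + 1) * (4 ^ m - 2) * _root_.bernoulli (2 * m) *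
        ((2 * (n - m) + 1).choose (2 * (l - m) + 1) * (-1) ^ (l - m)) =
      (-1) ^ (l + 1) * ((2 * n + 1).choose (2 * l + 1) : ℚ) *
        (((2 * l + 1).choose (2 * m) : ℚ) * (4 ^ m - 2) * _root_.bernoulli (2 * m)) := by
    have hml := Nat.lt_succ_iff.mp (mem_range.mp hm)
    have h_choose := congrArg (Nat.cast (R := ℚ)) (choose_mul_choose_two_mul hml hln)
    have h_sign : (-1 : ℚ) ^ (m + 1) * (-1) ^ (l - m) = (-1) ^ (l + 1) := by
      rw [← pow_add, show m + 1 + (l - m) = l + 1 by omega]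
    push_cast at h_choose
    linear_combination (4 ^ m - 2) * _root_.bernoulli (2 * m) *
      ((-1) ^ (m + 1) * (-1) ^ (l - m) * h_choose +
        ((2 * n + 1).choose (2 * l + 1) : ℚ) * ((2 * l + 1).choose (2 * m) : ℚ) * h_sign)
  rw [sum_congr rfl h_term, ← mul_sum, sum_choose_mul_four_pow_sub_two_mul_bernoulli hl0,
    mul_zero]

lemma sum_bernoulli_smul_Q_odd (n : ℕ) :
    ∑ m ∈ range (n + 1), (((2 * n + 1).choose (2 * m) : ℚ) * (-1) ^ (m + 1) * (4 ^ m - 2) *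
      _root_.bernoulli (2 * m)) • Q (2 * (n - m) + 1) = (2 * n + 1 : ℚ) • P (2 * n) := by
  set a : ℕ → ℚ := fun m =>
    ((2 * n + 1).choose (2 * m) : ℚ) * (-1) ^ (m + 1) * (4 ^ m - 2) * _root_.bernoulli (2 * m)
  have h_expand : ∑ m ∈ range (n + 1), a m • Q (2 * (n - m) + 1) =
      ∑ m ∈ range (n + 1), ∑ j ∈ range (n + 1 - m),
        (a m * ((2 * (n - m) + 1).choose (2 * j + 1) * (-1) ^ j)) • P (2 * (n - m - j)) := by
    refine sum_congr rfl fun m hm => ?_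
    rw [Q_two_mul_add_one, smul_sum, Nat.sub_add_comm (Nat.lt_succ_iff.mp (mem_range.mp hm))]
    simp only [smul_smul]
  have h_diag (l : ℕ) (hl : l ∈ range (n + 1)) (hl0 : l ≠ 0) : ∑ m ∈ range (l + 1),
      (a m * ((2 * (n - m) + 1).choose (2 * (l - m) + 1) * (-1) ^ (l - m))) •
        P (2 * (n - m - (l - m))) = 0 := by
    have hln := Nat.lt_succ_iff.mp (mem_range.mp hl)
    rw [sum_congr rfl fun m hm => by
        rw [show n - m - (l - m) = n - l by have := mem_range.mp hm; omega],
      ← sum_smul, sum_choose_bernoulli_mul_choose_odd_eq_zero hl0 hln, zero_smul]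
  rw [h_expand, ← sum_range_diag_flip, sum_eq_single_of_mem 0 (by simp) h_diag]
  norm_num [a]

theorem P_even_eq_sum_Q_bernoulli (n : ℕ) (x : ℚ) :
    (2 * n + 1 : ℚ) * (P (2 * n)).eval x =
      (Q (2 * n + 1)).eval x +
        ∑ i ∈ Finset.range n,
          ((2 * n + 1).choose (2 * i + 2) : ℚ) * (-1) ^ (i + 2) * (4 ^ (i + 1) - 2) *
            _root_.bernoulli (2 * i + 2) * (Q (2 * n - 2 * i - 1)).eval x := by
  rw [← smul_eq_mul, ← eval_smul, ← sum_bernoulli_smul_Q_odd, sum_range_succ', add_comm,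
    eval_add, eval_finsetSum]
  simp only [eval_smul, smul_eq_mul, Nat.choose_zero_right, mul_zero, zero_add, Nat.sub_zero,
    pow_zero, _root_.bernoulli_zero]
  congr 1
  · norm_num
  · refine sum_congr rfl fun i hi => ?_
    rw [show 2 * (n - (i + 1)) + 1 = 2 * n - 2 * i - 1 by have := mem_range.mp hi; omega,
      mul_add_one]
end

section
/- For every integer n ≥ 1, the derivative of Q_n satisfies (1+x^2) · (d/dx) Q_n(x) = Σ_{i=1}^{n} C(n, i) P_i(x) Q_{n-i}(x), where C(n,i) denotes the binomial coefficient. -/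
open Polynomial Finset

/-!
Under `x = tan θ` the operator `f ↦ (1 + x²) f'` is `d/dθ`, so `P n` is `tan⁽ⁿ⁾` written in `tan`,
and `Q n` is `sec⁽ⁿ⁾ / sec`, since `f ↦ (1 + x²) f' + x f` is `d/dθ` conjugated by `sec`.
Then `sec⁽ⁿ⁺¹⁾ = (tan · sec)⁽ⁿ⁾`, expanded by the Leibniz rule, reads
`Q (n+1) = ∑ C(n,i) P i Q (n-i)`; removing the term `i = 0`, which is `x Q n`, from both sides of
the recurrence for `Q (n+1)` leaves the identity.
-/

theorem iterate_mul_eq_sum_antidiagonal_choose {A : Type*} [Semiring A] (D L : A →+ A)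
    (hL : ∀ f g, L (f * g) = D f * g + f * L g) (n : ℕ) (f g : A) :
    L^[n] (f * g) = ∑ ij ∈ antidiagonal n, (n.choose ij.1 : A) * (D^[ij.1] f * L^[ij.2] g) := by
  induction n generalizing f g with
  | zero => simp
  | succ n ih =>
    rw [Function.iterate_succ_apply, hL, iterate_map_add, ih, ih,
      Finset.sum_antidiagonal_choose_succ_mul (fun i j => D^[i] f * L^[j] g), add_comm]
    congr 1
    refine sum_congr rfl fun ij hij => ?_
    rw [Nat.choose_symm_of_eq_add (mem_antidiagonal.mp hij).symm, ← Function.iterate_succ_apply,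
      Function.iterate_succ_apply']

noncomputable def tanDeriv : ℚ[X] →+ ℚ[X] :=
  (AddMonoidHom.mulLeft (1 + X ^ 2)).comp derivative.toAddMonoidHom

noncomputable def secDeriv : ℚ[X] →+ ℚ[X] := tanDeriv + AddMonoidHom.mulLeft X

theorem secDeriv_mul (f g : ℚ[X]) : secDeriv (f * g) = tanDeriv f * g + f * secDeriv g := by
  simp only [secDeriv, tanDeriv, AddMonoidHom.add_apply, AddMonoidHom.coe_comp,
    Function.comp_apply, AddMonoidHom.coe_mulLeft, LinearMap.toAddMonoidHom_coe, derivative_mul]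
  ring

theorem P_eq_iterate (n : ℕ) : P n = tanDeriv^[n] X := by
  induction n with
  | zero => rfl
  | succ n ih => rw [Function.iterate_succ_apply', ← ih]; rfl

theorem Q_eq_iterate (n : ℕ) : Q n = secDeriv^[n] 1 := by
  induction n with
  | zero => rfl
  | succ n ih => rw [Function.iterate_succ_apply', ← ih]; rfl

theorem Q_succ_eq_sum_antidiagonal (n : ℕ) :
    Q (n + 1) = ∑ ij ∈ antidiagonal n, (n.choose ij.1 : ℚ[X]) * (P ij.1 * Q ij.2) := by
  have hX : secDeriv 1 = X * 1 := by simp [secDeriv, tanDeriv]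
  simp only [Q_eq_iterate, P_eq_iterate, Function.iterate_succ_apply, hX]
  exact iterate_mul_eq_sum_antidiagonal_choose tanDeriv secDeriv secDeriv_mul n X 1

theorem one_add_X_sq_mul_derivative_Q (n : ℕ) :
    (1 + X ^ 2) * derivative (Q n) =
      ∑ i ∈ Icc 1 n, (n.choose i : ℚ[X]) * (P i * Q (n - i)) := by
  have h := Q_succ_eq_sum_antidiagonal n
  rw [Nat.sum_antidiagonal_eq_sum_range_succ_mk, ← Nat.Ico_zero_eq_range,
    sum_eq_sum_Ico_succ_bot n.succ_pos, zero_add, Nat.succ_eq_add_one, Ico_add_one_right_eq_Icc] at h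
  simp only [Q, Nat.choose_zero_right, Nat.cast_one, one_mul, P, Nat.sub_zero] at h
  exact add_right_cancel (h.trans (add_comm _ _))

theorem derivative_Q_eq_sum_PQ_general (n : ℕ) (x : ℚ) :
    (1 + x ^ 2) * (derivative (Q n)).eval x =
      ∑ i ∈ Finset.Icc 1 n, (n.choose i : ℚ) * (P i).eval x * (Q (n - i)).eval x := by
  simpa [eval_finsetSum, mul_assoc] using congrArg (eval x) (one_add_X_sq_mul_derivative_Q n)

theorem derivative_Q_eq_sum_PQ (n : ℕ) (hn : 1 ≤ n) (x : ℚ) :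
    (1 + x ^ 2) * (derivative (Q n)).eval x =
      ∑ i ∈ Finset.Icc 1 n, (n.choose i : ℚ) * (P i).eval x * (Q (n - i)).eval x :=
  derivative_Q_eq_sum_PQ_general n x
end
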